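/- arXiv:1905.04276 — 2 statements merged into one kernel-verified Lean document; each statement's English description precedes it below -/
import Mathlib

section
/- Suppose p and q are monic real polynomials of degree n and n+1 respectively, each with real simple zeros, such that the zeros of q strictly interlace those of p (between consecutive zeros of q lies exactly one zero of p). Then the monic polynomial r of degree n-1 defined by r(x) = -(1/ℓ)(q(x) - x·p(x)), where ℓ is chosen to make r monic, satisfies ℓ > 0. -/
/-!
Since `X·p` and `q` are monic of degree `n + 1` and agree in the coefficient of `X^n`,
`X·p - q` has degree `< n`, so Lagrange interpolation at the zeros `xᵢ` of `p` reads off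
`ℓ = ∑ᵢ -q(xᵢ) / ∏_{j ≠ i} (xᵢ - xⱼ)`. By interlacing, exactly `n - i` factors of
`q(xᵢ) = ∏ⱼ (xᵢ - yⱼ)` and `n - 1 - i` factors of `∏_{j ≠ i} (xᵢ - xⱼ)` are negative, so
the two have opposite signs and every summand is positive.
-/

open Polynomial Finset

theorem Polynomial.degree_sub_lt_of_coeff_eq {R : Type*} [Ring R] {f g : R[X]} {m : ℕ}
    (hf : f.Monic) (hg : g.Monic) (hfd : f.natDegree = m + 1) (hgd : g.natDegree = m + 1)
    (hm : f.coeff m = g.coeff m) : (f - g).degree < m := by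
  rw [degree_lt_iff_coeff_zero]
  intro k hk
  rw [coeff_sub, sub_eq_zero]
  obtain rfl | rfl | hk := show k = m ∨ k = m + 1 ∨ m + 1 < k by omega
  · exact hm
  · rw [← hfd, hf.coeff_natDegree, hfd, ← hgd, hg.coeff_natDegree]
  · rw [coeff_eq_zero_of_natDegree_lt (hfd ▸ hk), coeff_eq_zero_of_natDegree_lt (hgd ▸ hk)]

theorem Finset.neg_one_pow_card_filter_lt_mul_prod_sub_pos {ι R : Type*} [CommRing R]
    [LinearOrder R] [IsStrictOrderedRing R] (s : Finset ι) (z : ι → R) (t : R)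
    (h : ∀ j ∈ s, z j ≠ t) : 0 < (-1) ^ #{j ∈ s | t < z j} * ∏ j ∈ s, (t - z j) := by
  rw [← prod_filter_mul_prod_filter_not s (fun j => t < z j), ← mul_assoc, ← prod_neg]
  refine mul_pos (prod_pos fun j hj => ?_) (prod_pos fun j hj => ?_)
  · simpa using (mem_filter.1 hj).2
  · obtain ⟨hjs, hj⟩ := mem_filter.1 hj
    exact sub_pos.2 ((not_lt.1 hj).lt_of_ne (h j hjs))

section Interlacing

variable {n : ℕ} {x : Fin n → ℝ} {y : Fin (n + 1) → ℝ}

theorem lt_iff_castSucc_lt_of_interlacing (hy : StrictMono y)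
    (hint : ∀ i : Fin n, y i.castSucc < x i ∧ x i < y i.succ) (i : Fin n) (j : Fin (n + 1)) :
    x i < y j ↔ i.castSucc < j := by
  refine ⟨fun h => lt_of_not_ge fun hj => ?_, fun h => ?_⟩
  · exact (hy.monotone hj).not_gt ((hint i).1.trans h)
  · exact (hint i).2.trans_le (hy.monotone (Fin.castSucc_lt_iff_succ_le.1 h))

theorem ne_of_interlacing (hy : StrictMono y)
    (hint : ∀ i : Fin n, y i.castSucc < x i ∧ x i < y i.succ) (i : Fin n) (j : Fin (n + 1)) :
    y j ≠ x i := by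
  rcases lt_or_ge i.castSucc j with h | h
  · exact ((lt_iff_castSucc_lt_of_interlacing hy hint i j).2 h).ne'
  · exact ((hy.monotone h).trans_lt (hint i).1).ne

theorem prod_sub_interlacing_mul_prod_erase_sub_neg (hx : StrictMono x) (hy : StrictMono y)
    (hint : ∀ i : Fin n, y i.castSucc < x i ∧ x i < y i.succ) (i : Fin n) :
    (∏ j, (x i - y j)) * ∏ j ∈ univ.erase i, (x i - x j) < 0 := by
  have hq := neg_one_pow_card_filter_lt_mul_prod_sub_pos univ y (x i)
    fun j _ => ne_of_interlacing hy hint i j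
  have hp := neg_one_pow_card_filter_lt_mul_prod_sub_pos (univ.erase i) x (x i)
    fun j hj => hx.injective.ne (ne_of_mem_erase hj)
  have hq_card : #{j | x i < y j} = n - 1 - i + 1 := by
    rw [filter_congr fun j _ => lt_iff_castSucc_lt_of_interlacing hy hint i j, filter_lt_eq_Ioi,
      Fin.card_Ioi]
    simp only [Fin.val_castSucc]
    omega
  have hp_card : #{j ∈ univ.erase i | x i < x j} = n - 1 - i := by
    rw [← Fin.card_Ioi]
    congr 1
    ext j
    simp only [mem_filter, mem_erase, mem_univ, mem_Ioi, hx.lt_iff_lt]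
    exact ⟨And.right, fun h => ⟨⟨h.ne', trivial⟩, h⟩⟩
  rw [hq_card] at hq
  rw [hp_card] at hp
  have := mul_pos hq hp
  rw [show ∀ (k : ℕ) (a b : ℝ),
      (-1) ^ (k + 1) * a * ((-1) ^ k * b) = (-1) ^ (2 * k + 1) * (a * b) from
      fun k a b => by ring, (odd_two_mul_add_one _).neg_one_pow] at this
  linarith

end Interlacing

/-- Wendroff's step downwards: if the zeros of the monic polynomial `q` of degree `n+1`
strictly interlace those of the monic polynomial `p` of degree `n`, and the polynomial
`q - X·p` has degree at most `n-1` (so that `r = -(1/ℓ)(q - X·p)` can be monic of degree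
`n-1`), then the normalizing constant `ℓ = β₂(p) - β₂(q) = (X·p - q).coeff (n-1)`
is positive. -/
theorem wendroff_ell_pos (n : ℕ) (hn : 1 ≤ n)
    (x : Fin n → ℝ) (y : Fin (n + 1) → ℝ)
    (hx : StrictMono x) (hy : StrictMono y)
    (hint : ∀ i : Fin n, y i.castSucc < x i ∧ x i < y i.succ)
    (p q : Polynomial ℝ)
    (hp : p = ∏ i, (X - C (x i))) (hq : q = ∏ i, (X - C (y i)))
    (hdeg : (q - X * p).coeff n = 0)
    (ℓ : ℝ) (hℓ : ℓ = (X * p - q).coeff (n - 1)) :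
    0 < ℓ := by
  rw [← Lagrange.nodal_eq] at hp hq
  subst hp hq hℓ
  have hdeg_lt : (X * Lagrange.nodal univ x - Lagrange.nodal univ y).degree <
      (#(univ : Finset (Fin n)) : WithBot ℕ) := by
    rw [card_fin]
    refine degree_sub_lt_of_coeff_eq (monic_X.mul Lagrange.nodal_monic) Lagrange.nodal_monic
      ?_ ?_ (sub_eq_zero.1 hdeg).symm
    · rw [natDegree_X_mul Lagrange.nodal_ne_zero, Lagrange.natDegree_nodal, card_fin]
    · rw [Lagrange.natDegree_nodal, card_fin]
  rw [show n - 1 = #(univ : Finset (Fin n)) - 1 by simp,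
    Lagrange.coeff_eq_sum hx.injective.injOn hdeg_lt]
  refine sum_pos (fun i _ => ?_) (univ_nonempty_iff.2 ⟨⟨0, hn⟩⟩)
  rw [eval_sub, eval_mul, Lagrange.eval_nodal_at_node (mem_univ i), mul_zero, zero_sub,
    Lagrange.eval_nodal, neg_div, neg_pos, div_neg_iff, ← mul_neg_iff]
  exact prod_sub_interlacing_mul_prod_erase_sub_neg hx hy hint i
end

section
/- Let {p_k} be a sequence of monic real polynomials satisfying p_0 = 1, p_1(x) = x - a_1, and p_k(x) = (x - a_k)p_{k-1}(x) - b_k p_{k-2}(x) for k ≥ 2 with a_k ∈ ℝ and b_k > 0. If all zeros of p_{n-1} and p_n are in (-M, M) and, for each k > n, one has 0 < b_k < M·p_{k-1}(M)/p_{k-2}(M) and a_k = 0, with the zeros symmetric, then all zeros of p_k lie in (-M, M) for every k ≥ n. -/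
open Polynomial

/-- A monic real polynomial with no roots in `[M, ∞)` is positive there. -/
lemma wendroff_monic_pos_of_no_roots {q : Polynomial ℝ} (hq : q.Monic) {M : ℝ}
    (h : ∀ t : ℝ, M ≤ t → ¬ q.IsRoot t) : ∀ t : ℝ, M ≤ t → 0 < q.eval t := by
  intro t ht
  rcases lt_or_ge 0 (q.eval t) with h' | h'
  · exact h'
  exfalso
  have hne : q.eval t ≠ 0 := h t ht
  have hlt : q.eval t < 0 := h'.lt_of_ne hne
  have hdeg : 0 < q.degree := by
    rcases Nat.eq_zero_or_pos q.natDegree with hd0 | hd0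
    · have : q = 1 := eq_one_of_monic_natDegree_zero hq hd0
      simp [this] at hlt; linarith
    · exact Polynomial.natDegree_pos_iff_degree_pos.mp hd0
  have htend := Polynomial.tendsto_atTop_of_leadingCoeff_nonneg q hdeg (by simp [hq.leadingCoeff])
  obtain ⟨t', h1, h2⟩ :=
    ((htend.eventually_ge_atTop 1).and (Filter.eventually_ge_atTop t)).exists
  have hcont : ContinuousOn (fun x => q.eval x) (Set.Icc t t') :=
    (Polynomial.continuous q).continuousOn
  have h0mem : (0 : ℝ) ∈ Set.Icc (q.eval t) (q.eval t') := ⟨le_of_lt hlt, by linarith⟩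
  obtain ⟨x, hx, hx0⟩ := intermediate_value_Icc h2 hcont h0mem
  exact h x (le_trans ht hx.1) hx0

/-- Ratio monotonicity from positivity of the Wronskian. -/
lemma wendroff_ratio_mono {f g : Polynomial ℝ} {M : ℝ}
    (hg : ∀ t : ℝ, M ≤ t → 0 < g.eval t)
    (hW : ∀ x : ℝ, 0 < (derivative f).eval x * g.eval x - f.eval x * (derivative g).eval x) :
    ∀ t : ℝ, M ≤ t → f.eval M * g.eval t ≤ f.eval t * g.eval M := by
  have hmono : StrictMonoOn (fun x => f.eval x / g.eval x) (Set.Ici M) := by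
    apply strictMonoOn_of_deriv_pos (convex_Ici M)
    · exact ContinuousOn.div f.continuous.continuousOn g.continuous.continuousOn
        (fun x hx => (hg x hx).ne')
    · intro x hx
      rw [interior_Ici] at hx
      have hgx : g.eval x ≠ 0 := (hg x (le_of_lt hx)).ne'
      have hd : HasDerivAt (fun x => f.eval x / g.eval x)
          (((derivative f).eval x * g.eval x - f.eval x * (derivative g).eval x)
            / (g.eval x) ^ 2) x := (f.hasDerivAt x).div (g.hasDerivAt x) hgx
      rw [hd.deriv]
      exact div_pos (hW x) (by positivity)
  intro t ht
  rcases eq_or_lt_of_le ht with rfl | hlt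
  · exact le_refl _
  · have hm := hmono Set.self_mem_Ici (le_of_lt hlt : M ≤ t) hlt
    have hgM := hg M le_rfl
    have hgt := hg t ht
    rw [div_lt_div_iff₀ hgM hgt] at hm
    nlinarith [hm]

/-- If a monic orthogonal-type sequence generated by a three-term recurrence has all
zeros of `p_{n-1}` and `p_n` in `(-M, M)`, and for each `k > n` one takes `a_k = 0` and
`0 < b_k < M·p_{k-1}(M)/p_{k-2}(M)`, with the polynomials symmetric from index `n` on,
then all zeros of `p_k` lie in `(-M, M)` for every `k ≥ n`. -/
theorem wendroff_all_zeros_in_interval (M : ℝ) (hM : 0 < M) (n : ℕ) (hn : 1 ≤ n)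
    (p : ℕ → Polynomial ℝ) (A B : ℕ → ℝ)
    (h0 : p 0 = 1) (h1 : p 1 = X - C (A 1))
    (hrec : ∀ k, 2 ≤ k → p k = (X - C (A k)) * p (k - 1) - C (B k) * p (k - 2))
    (hBpos : ∀ k, 2 ≤ k → 0 < B k)
    (hzn1 : ∀ t : ℝ, (p (n - 1)).IsRoot t → t ∈ Set.Ioo (-M) M)
    (hzn : ∀ t : ℝ, (p n).IsRoot t → t ∈ Set.Ioo (-M) M)
    (hA : ∀ k, n < k → A k = 0)
    (hB : ∀ k, n < k → B k < M * (p (k - 1)).eval M / (p (k - 2)).eval M)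
    (hsym : ∀ k, n ≤ k → ∀ t : ℝ, (p k).eval (-t) = (-1 : ℝ) ^ k * (p k).eval t) :
    ∀ k, n ≤ k → ∀ t : ℝ, (p k).IsRoot t → t ∈ Set.Ioo (-M) M := by
  -- Step 1: monicity and degrees
  have hmon : ∀ k, (p k).Monic ∧ (p k).natDegree = k := by
    intro k
    induction k using Nat.strong_induction_on with
    | _ k ih =>
      match k with
      | 0 =>
        refine ⟨?_, ?_⟩
        · rw [h0]; exact monic_one
        · rw [h0]; simp
      | 1 =>
        refine ⟨?_, ?_⟩
        · rw [h1]; exact monic_X_sub_C _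
        · simp [h1]
      | (k+2) =>
        obtain ⟨m1, d1⟩ := ih (k+1) (by omega)
        obtain ⟨m2, d2⟩ := ih k (by omega)
        have hr : p (k+2) = (X - C (A (k+2))) * p (k+1) - C (B (k+2)) * p k := by
          simpa using hrec (k+2) (by omega)
        have hm : ((X - C (A (k+2))) * p (k+1)).Monic := (monic_X_sub_C _).mul m1
        have hdm : ((X - C (A (k+2))) * p (k+1)).natDegree = k + 2 := by
          rw [(monic_X_sub_C _).natDegree_mul m1, natDegree_X_sub_C, d1]; omega
        have hlow : (C (B (k+2)) * p k).natDegree < k + 2 := by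
          have := natDegree_C_mul_le (B (k+2)) (p k)
          omega
        have hdeglow : (C (B (k+2)) * p k).degree < ((X - C (A (k+2))) * p (k+1)).degree := by
          refine lt_of_le_of_lt degree_le_natDegree ?_
          rw [Polynomial.degree_eq_natDegree hm.ne_zero, hdm]
          exact_mod_cast hlow
        rw [hr]
        exact ⟨hm.sub_of_left hdeglow,
          by rw [natDegree_sub_eq_left_of_natDegree_lt (by omega), hdm]⟩
  -- Step 2: Wronskian positivity
  have hW : ∀ k : ℕ, ∀ x : ℝ,
      0 < (derivative (p (k+1))).eval x * (p k).eval x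
          - (p (k+1)).eval x * (derivative (p k)).eval x := by
    intro k
    induction k with
    | zero =>
      intro x
      simp [h0, h1]
    | succ k ih =>
      intro x
      have hr : p (k+2) = (X - C (A (k+2))) * p (k+1) - C (B (k+2)) * p k := by
        simpa using hrec (k+2) (by omega)
      have hb := hBpos (k+2) (by omega)
      rw [hr]
      simp only [derivative_sub, derivative_mul, derivative_X, derivative_C,
        derivative_C_mul, eval_sub, eval_mul, eval_add, eval_X, eval_C, eval_one,
        zero_mul, one_mul, zero_sub, sub_zero, eval_zero]
      nlinarith [ih x, sq_nonneg ((p (k+1)).eval x), mul_pos hb (ih x)]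
  -- Step 3: positivity on [M, ∞) for all k ≥ n - 1, by two-step induction
  have hposbase : ∀ m, (∀ t : ℝ, (p m).IsRoot t → t ∈ Set.Ioo (-M) M) →
      ∀ t : ℝ, M ≤ t → 0 < (p m).eval t := by
    intro m hz
    refine wendroff_monic_pos_of_no_roots (hmon m).1 ?_
    intro t ht hroot
    exact absurd (hz t hroot).2 (not_lt.mpr ht)
  have key : ∀ j : ℕ, ∀ t : ℝ, M ≤ t → 0 < (p (n - 1 + j)).eval t := by
    intro j
    induction j using Nat.strong_induction_on with
    | _ j ih =>
      match j with
      | 0 => exact hposbase (n - 1) hzn1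
      | 1 =>
        have : n - 1 + 1 = n := by omega
        rw [this]
        exact hposbase n hzn
      | (j+2) =>
        intro t ht
        set k := n - 1 + (j + 2) with hk
        have hk2 : 2 ≤ k := by omega
        have hkn : n < k := by omega
        have hk1 : k - 1 = n - 1 + (j + 1) := by omega
        have hk2' : k - 2 = n - 1 + j := by omega
        have hP1 := ih (j+1) (by omega)
        have hP2 := ih j (by omega)
        have hA0 : A k = 0 := hA k hkn
        -- Wronskian for the pair (k-1, k-2)
        have hWk : ∀ x : ℝ, 0 < (derivative (p (k-1))).eval x * (p (k-2)).eval x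
            - (p (k-1)).eval x * (derivative (p (k-2))).eval x := by
          intro x
          have h12 : k - 1 = (k - 2) + 1 := by omega
          rw [h12]
          exact hW (k-2) x
        have hratio := wendroff_ratio_mono (f := p (k-1)) (g := p (k-2))
          (by rw [hk2']; exact hP2) hWk
        have hrt := hratio t ht
        have hBk := hB k hkn
        have hbpos := hBpos k hk2
        have hQ2 : 0 < (p (k-2)).eval M := by rw [hk2']; exact hP2 M le_rfl
        have hQ1 : 0 < (p (k-1)).eval M := by rw [hk1]; exact hP1 M le_rfl
        have hPt1 : 0 < (p (k-1)).eval t := by rw [hk1]; exact hP1 t ht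
        have hPt2 : 0 < (p (k-2)).eval t := by rw [hk2']; exact hP2 t ht
        have hBQ : B k * (p (k-2)).eval M < M * (p (k-1)).eval M :=
          (lt_div_iff₀ hQ2).mp hBk
        have heval : (p k).eval t = t * (p (k-1)).eval t - B k * (p (k-2)).eval t := by
          rw [hrec k hk2]
          simp [hA0]
        have hgoal : 0 < t * (p (k-1)).eval t - B k * (p (k-2)).eval t := by
          nlinarith [mul_lt_mul_of_pos_right hBQ (mul_pos hPt1 hQ2),
            mul_le_mul_of_nonneg_left hrt (le_of_lt (mul_pos hbpos hQ2)),
            mul_pos hQ1 hQ2, mul_pos hPt1 hQ1,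
            mul_le_mul_of_nonneg_right (le_trans (le_of_lt hM) ht)
              (le_of_lt (mul_pos (mul_pos hPt1 hQ1) hQ2))]
        rw [heval]
        exact hgoal
  have keypos : ∀ k, n - 1 ≤ k → ∀ t : ℝ, M ≤ t → 0 < (p k).eval t := by
    intro k hk
    have : k = n - 1 + (k - (n - 1)) := by omega
    rw [this]
    exact key (k - (n - 1))
  -- Step 4: conclusion
  intro k hk t hroot
  have hpos := keypos k (by omega)
  constructor
  · by_contra hle
    push_neg at hle
    have hMt : M ≤ -t := by linarith
    have := hpos (-t) hMt
    rw [hsym k hk t, hroot] at this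
    simp at this
  · by_contra hle
    push_neg at hle
    have := hpos t hle
    rw [hroot] at this
    exact lt_irrefl 0 this
end
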